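/- arXiv:1104.2647 — 2 statements merged into one kernel-verified Lean document; each statement's English description precedes it below -/
import Mathlib

section
/- Let B be an m×m real matrix, c, d ∈ ℝ^m, and define x(t) = e^{(t−t₀)B} y₀ + e^{tB} ∫_{t₀}^{t} e^{−sB}(e^{−sBᵀ} d + c) ds. Then x satisfies x''(t) = Bᵀ(Bx(t) + c) + Bx'(t) − Bᵀx'(t) for all t, and x(t₀) = y₀. -/
/-!
Duhamel's formula shows that `x` solves `x' = B x + g` with `g t = e^{-tBᵀ} d + c`. Since
`g' = -Bᵀ (g - c) = -Bᵀ (x' - B x - c)`, differentiating `x' = B x + g` once more gives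
`x'' = B x' - Bᵀ x' + Bᵀ (B x + c)`.
-/

open Matrix NormedSpace

theorem HasDerivAt.matrix_mulVec {𝕜 : Type*} [NontriviallyNormedField 𝕜] {m n : Type*}
    [Fintype n] {A : 𝕜 → Matrix m n 𝕜} {A' : Matrix m n 𝕜} {v : 𝕜 → n → 𝕜} {v' : n → 𝕜}
    {t : 𝕜} (hA : HasDerivAt A A' t) (hv : HasDerivAt v v' t) :
    HasDerivAt (fun s => A s *ᵥ v s) (A' *ᵥ v t + A t *ᵥ v') t := by
  have hAij : ∀ i j, HasDerivAt (fun s => A s i j) (A' i j) t := fun i =>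
    hasDerivAt_pi.1 (hasDerivAt_pi.1 hA i)
  refine hasDerivAt_pi.2 fun i => ?_
  simp only [mulVec, dotProduct, Pi.add_apply, ← Finset.sum_add_distrib]
  exact HasDerivAt.fun_sum fun j _ => (hAij i j).mul (hasDerivAt_pi.1 hv j)

section VariationOfConstants

variable {n : Type*} [Fintype n] [DecidableEq n]

theorem hasDerivAt_exp_smul_mulVec (B : Matrix n n ℝ) {v : ℝ → n → ℝ} {v' : n → ℝ} {t : ℝ}
    (hv : HasDerivAt v v' t) :
    HasDerivAt (fun s => exp (s • B) *ᵥ v s)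
      (B *ᵥ (exp (t • B) *ᵥ v t) + exp (t • B) *ᵥ v') t := by
  -- any submultiplicative norm will do: it induces the product topology used in the statement
  let _ := Matrix.linftyOpNormedRing (n := n) (α := ℝ)
  let _ := Matrix.linftyOpNormedAlgebra (n := n) (R := ℝ) (α := ℝ)
  rw [mulVec_mulVec]
  exact (hasDerivAt_exp_smul_const' B t).matrix_mulVec hv

theorem continuous_exp_smul (B : Matrix n n ℝ) : Continuous fun s : ℝ => exp (s • B) := by
  let _ := Matrix.linftyOpNormedRing (n := n) (α := ℝ)
  let _ := Matrix.linftyOpNormedAlgebra (n := n) (R := ℝ) (α := ℝ)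
  exact continuous_iff_continuousAt.2 fun t => (hasDerivAt_exp_smul_const' B t).continuousAt

noncomputable def variationOfConstants (B : Matrix n n ℝ) (t₀ : ℝ) (y₀ : n → ℝ)
    (g : ℝ → n → ℝ) (t : ℝ) : n → ℝ :=
  exp ((t - t₀) • B) *ᵥ y₀ + exp (t • B) *ᵥ ∫ s in t₀..t, exp (-(s • B)) *ᵥ g s

theorem variationOfConstants_self (B : Matrix n n ℝ) (t₀ : ℝ) (y₀ : n → ℝ) (g : ℝ → n → ℝ) :
    variationOfConstants B t₀ y₀ g t₀ = y₀ := by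
  simp [variationOfConstants]

theorem hasDerivAt_variationOfConstants (B : Matrix n n ℝ) (t₀ : ℝ) (y₀ : n → ℝ)
    {g : ℝ → n → ℝ} (hg : Continuous g) (t : ℝ) :
    HasDerivAt (variationOfConstants B t₀ y₀ g)
      (B *ᵥ variationOfConstants B t₀ y₀ g t + g t) t := by
  have hint : Continuous fun s => exp (-(s • B)) *ᵥ g s := by
    simp_rw [← smul_neg]
    exact (continuous_exp_smul (-B)).matrix_mulVec hg
  have hhom := (hasDerivAt_exp_smul_mulVec B (hasDerivAt_const (t - t₀) y₀)).comp_sub_const t t₀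
  have hpart := hasDerivAt_exp_smul_mulVec B (hint.integral_hasStrictDerivAt t₀ t).hasDerivAt
  have hcancel : exp (t • B) *ᵥ (exp (-(t • B)) *ᵥ g t) = g t := by
    rw [mulVec_mulVec, ← Matrix.exp_add_of_commute _ _ (Commute.refl (t • B)).neg_right]
    simp
  refine (hhom.add hpart).congr_deriv ?_
  simp only [variationOfConstants, mulVec_add, mulVec_zero, add_zero, hcancel, add_assoc]

end VariationOfConstants

/-- The curve `x(t) = e^{(t−t₀)B} y₀ + e^{tB} ∫_{t₀}^{t} e^{−sB}(e^{−sBᵀ} d + c) ds`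
solves the Euler–Lagrange equation `x'' = Bᵀ(Bx + c) + Bx' − Bᵀx'` for the affine prior field
`A(y) = By + c`, with `x(t₀) = y₀`. -/
theorem stmt4 {m : ℕ} (B : Matrix (Fin m) (Fin m) ℝ) (c d y₀ : Fin m → ℝ) (t₀ : ℝ)
    (x : ℝ → Fin m → ℝ)
    (hxdef : ∀ t, x t =
      (NormedSpace.exp ((t - t₀) • B)).mulVec y₀ +
      (NormedSpace.exp (t • B)).mulVec
        (∫ s in t₀..t,
          (NormedSpace.exp (-(s • B))).mulVec
            ((NormedSpace.exp (-(s • Bᵀ))).mulVec d + c))) :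
    x t₀ = y₀ ∧
    ∀ t, deriv (deriv x) t =
      Bᵀ.mulVec (B.mulVec (x t) + c) + B.mulVec (deriv x t) - Bᵀ.mulVec (deriv x t) := by
  set g : ℝ → Fin m → ℝ := fun s => exp (-(s • Bᵀ)) *ᵥ d + c
  have hx : x = variationOfConstants B t₀ y₀ g := funext hxdef
  have hg : ∀ t, HasDerivAt g (-(Bᵀ *ᵥ (g t - c))) t := fun t => by
    have := (hasDerivAt_exp_smul_mulVec (-Bᵀ) (hasDerivAt_const t d)).add_const c
    simpa only [g, smul_neg, add_sub_cancel_right, mulVec_zero, add_zero, neg_mulVec] using this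
  have hg_cont : Continuous g := Differentiable.continuous fun t => (hg t).differentiableAt
  have hx' : ∀ t, HasDerivAt x (B *ᵥ x t + g t) t :=
    hx ▸ hasDerivAt_variationOfConstants B t₀ y₀ hg_cont
  have hdx : deriv x = fun t => B *ᵥ x t + g t := funext fun t => (hx' t).deriv
  refine ⟨hx ▸ variationOfConstants_self B t₀ y₀ g, fun t => ?_⟩
  have hx'' : HasDerivAt (deriv x) (B *ᵥ (B *ᵥ x t + g t) - Bᵀ *ᵥ (g t - c)) t := by
    have hBx : HasDerivAt (fun u => B *ᵥ x u) (B *ᵥ (B *ᵥ x t + g t)) t :=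
      (mulVecLin B).toContinuousLinearMap.hasFDerivAt.comp_hasDerivAt t (hx' t)
    rw [hdx, sub_eq_add_neg]
    exact hBx.add (hg t)
  rw [hx''.deriv, hdx]
  simp only [mulVec_add, mulVec_sub]
  abel
end

section
/- Fix real constants β, ε with ε > 0, λ with 0 < λ² < 1, and v₀, ψ₀ ∈ ℝ. Define ψ(t) = ψ₀ + tβ + arctan(√(1−λ²) tan(tε + v₀)) (on an interval where tan is defined) and x(t) = ( √(1 − λ² sin²(tε+v₀)) cos ψ(t), √(1 − λ² sin²(tε+v₀)) sin ψ(t), λ sin(tε+v₀) ). Then x(t) lies on the unit sphere S² for all t, and ψ'(t) = β + c/(1 − x₃(t)²) with c = ε√(1−λ²), and (x₃')² = ε²(λ² − x₃²). -/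
/-! The derivative of `arctan (k tan u)` is `k / (cos² u + k² sin² u)`, and for `k = √(1 - λ²)`
this denominator is `1 - λ² sin² u = 1 - x₃²`, which gives the formula for `ψ'`. -/

open Real

theorem hasDerivAt_arctan_const_mul_tan (k : ℝ) {u : ℝ} (hu : cos u ≠ 0) :
    HasDerivAt (fun u => arctan (k * tan u)) (k / (cos u ^ 2 + k ^ 2 * sin u ^ 2)) u := by
  refine ((hasDerivAt_arctan (k * tan u)).comp u ((hasDerivAt_tan hu).const_mul k)).congr_deriv ?_
  rw [tan_eq_sin_div_cos]
  field_simp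

theorem cos_sq_add_sqrt_one_sub_sq_mul_sin_sq {lam : ℝ} (hlam : lam ^ 2 ≤ 1) (u : ℝ) :
    cos u ^ 2 + √(1 - lam ^ 2) ^ 2 * sin u ^ 2 = 1 - (lam * sin u) ^ 2 := by
  rw [sq_sqrt (by linarith)]
  linear_combination sin_sq_add_cos_sq u

theorem sq_sqrt_mul_cos_add_sq_sqrt_mul_sin {a : ℝ} (ha : 0 ≤ a) (θ : ℝ) :
    (√a * cos θ) ^ 2 + (√a * sin θ) ^ 2 = a := by
  rw [mul_pow, mul_pow, sq_sqrt ha]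
  linear_combination a * sin_sq_add_cos_sq θ

theorem stmt17_general (β ε lam v₀ ψ₀ : ℝ) (hlam : 0 < lam ^ 2 ∧ lam ^ 2 < 1) :
    let ψ : ℝ → ℝ := fun t => ψ₀ + t * β + arctan (Real.sqrt (1 - lam ^ 2) * tan (t * ε + v₀))
    let x₃ : ℝ → ℝ := fun t => lam * sin (t * ε + v₀)
    let x₁ : ℝ → ℝ := fun t => Real.sqrt (1 - lam ^ 2 * (sin (t * ε + v₀)) ^ 2) * cos (ψ t)
    let x₂ : ℝ → ℝ := fun t => Real.sqrt (1 - lam ^ 2 * (sin (t * ε + v₀)) ^ 2) * sin (ψ t)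
    (∀ t, (x₁ t) ^ 2 + (x₂ t) ^ 2 + (x₃ t) ^ 2 = 1) ∧
    (∀ t, cos (t * ε + v₀) ≠ 0 →
      HasDerivAt ψ (β + ε * Real.sqrt (1 - lam ^ 2) / (1 - (x₃ t) ^ 2)) t) ∧
    (∀ t, (deriv x₃ t) ^ 2 = ε ^ 2 * (lam ^ 2 - (x₃ t) ^ 2)) := by
  intro ψ x₃ x₁ x₂
  have hphase (t : ℝ) : HasDerivAt (fun t => t * ε + v₀) ε t :=
    (hasDerivAt_mul_const ε).add_const v₀
  refine ⟨fun t => ?_, fun t hcos => ?_, fun t => ?_⟩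
  · have hr : 0 ≤ 1 - lam ^ 2 * sin (t * ε + v₀) ^ 2 := by
      nlinarith [sin_sq_le_one (t * ε + v₀), sq_nonneg (sin (t * ε + v₀))]
    simp only [x₁, x₂, x₃, sq_sqrt_mul_cos_add_sq_sqrt_mul_sin hr]
    ring
  · have hψ := ((hasDerivAt_mul_const β).const_add ψ₀).add
      ((hasDerivAt_arctan_const_mul_tan √(1 - lam ^ 2) hcos).comp t (hphase t))
    rw [cos_sq_add_sqrt_one_sub_sq_mul_sin_sq hlam.2.le] at hψ
    refine hψ.congr_deriv ?_
    ring
  · rw [(((hphase t).sin).const_mul lam).deriv]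
    simp only [x₃]
    linear_combination lam ^ 2 * ε ^ 2 * sin_sq_add_cos_sq (t * ε + v₀)

/-- For `0 < λ² < 1`, `ε > 0`, the spherical curve
`x(t) = (√(1−λ²sin²(tε+v₀)) cos ψ(t), √(1−λ²sin²(tε+v₀)) sin ψ(t), λ sin(tε+v₀))` with
`ψ(t) = ψ₀ + tβ + arctan(√(1−λ²) tan(tε+v₀))` lies on `S²`, satisfies
`ψ' = β + c/(1 − x₃²)` with `c = ε√(1−λ²)` (where `tan` is defined), and
`(x₃')² = ε²(λ² − x₃²)`. -/
theorem stmt17 (β ε lam v₀ ψ₀ : ℝ) (hε : 0 < ε) (hlam : 0 < lam ^ 2 ∧ lam ^ 2 < 1) :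
    let ψ : ℝ → ℝ := fun t => ψ₀ + t * β + arctan (Real.sqrt (1 - lam ^ 2) * tan (t * ε + v₀))
    let x₃ : ℝ → ℝ := fun t => lam * sin (t * ε + v₀)
    let x₁ : ℝ → ℝ := fun t => Real.sqrt (1 - lam ^ 2 * (sin (t * ε + v₀)) ^ 2) * cos (ψ t)
    let x₂ : ℝ → ℝ := fun t => Real.sqrt (1 - lam ^ 2 * (sin (t * ε + v₀)) ^ 2) * sin (ψ t)
    (∀ t, (x₁ t) ^ 2 + (x₂ t) ^ 2 + (x₃ t) ^ 2 = 1) ∧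
    (∀ t, cos (t * ε + v₀) ≠ 0 →
      HasDerivAt ψ (β + ε * Real.sqrt (1 - lam ^ 2) / (1 - (x₃ t) ^ 2)) t) ∧
    (∀ t, (deriv x₃ t) ^ 2 = ε ^ 2 * (lam ^ 2 - (x₃ t) ^ 2)) :=
  stmt17_general β ε lam v₀ ψ₀ hlam
end
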